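/- arXiv:0711.3610 — 6 statements merged into one kernel-verified Lean document; each statement's English description precedes it below -/
import Mathlib

section
/- Each column of the kernel G is divergence-free: for every y ∈ ℝ² with y ≠ 0 and each j ∈ {1,2}, ∂₁G₁ⱼ(y) + ∂₂G₂ⱼ(y) = 0 (and, G being symmetric, likewise ∂₁Gⱼ₁ + ∂₂Gⱼ₂ = 0). Moreover, for each j there exists a smooth function qⱼ on the open upper half-plane {y₂ > 0} such that Δ(G eⱼ) = ∇qⱼ there, i.e. each column of G is the velocity field of a solution of the homogeneous Stokes equations −Δ(G eⱼ) + ∇qⱼ = 0 in {y₂ > 0}. -/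
open Real

/-- Partial derivative in the first variable of a function of two real variables. -/
noncomputable def pd1 (f : ℝ → ℝ → ℝ) : ℝ → ℝ → ℝ :=
  fun a b => deriv (fun t => f t b) a

/-- Partial derivative in the second variable of a function of two real variables. -/
noncomputable def pd2 (f : ℝ → ℝ → ℝ) : ℝ → ℝ → ℝ :=
  fun a b => deriv (fun t => f a t) b

/-- The coordinates of a point of the plane, indexed by `Fin 2`. -/
def coordFun : Fin 2 → ℝ → ℝ → ℝ := fun i y1 y2 => if i = 0 then y1 else y2

/-- The entries of the Poisson-type kernel for the Stokes operator in the half-plane: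
`G(y) = (2y₂/(π(y₁²+y₂²)²)) · [[y₁², y₁y₂],[y₁y₂, y₂²]]`. -/
noncomputable def stokesKernel (i j : Fin 2) (y1 y2 : ℝ) : ℝ :=
  2 * y2 / (π * (y1 ^ 2 + y2 ^ 2) ^ 2) * (coordFun i y1 y2 * coordFun j y1 y2)

lemma hd_den (c t : ℝ) (k : ℕ) :
    HasDerivAt (fun s : ℝ => π * (s ^ 2 + c) ^ k) (π * ((k : ℝ) * (t ^ 2 + c) ^ (k - 1) * (2 * t))) t := by
  have h1 : HasDerivAt (fun s : ℝ => s ^ 2 + c) (2 * t) t := by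
    simpa using (hasDerivAt_pow 2 t).add_const c
  have h2 := h1.pow k
  simpa using h2.const_mul π

lemma hasDerivAt_poly4 (c0 c1 c2 c3 c4 t : ℝ) :
    HasDerivAt (fun s : ℝ => c0 + c1 * s + c2 * s ^ 2 + c3 * s ^ 3 + c4 * s ^ 4)
      (c1 + 2 * c2 * t + 3 * c3 * t ^ 2 + 4 * c4 * t ^ 3) t := by
  have h1 := (hasDerivAt_id t).const_mul c1
  have h2 := (hasDerivAt_pow 2 t).const_mul c2
  have h3 := (hasDerivAt_pow 3 t).const_mul c3
  have h4 := (hasDerivAt_pow 4 t).const_mul c4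
  have := ((((h1.add h2).add h3).add h4).const_add c0)
  convert this using 1
  · rfl
  · rfl
  · funext x; simp only [id, Pi.add_apply]; ring
  · push_cast; ring

lemma deriv_p4 (c0 c1 c2 c3 c4 c t : ℝ) (k : ℕ) (hc : t ^ 2 + c ≠ 0) :
    deriv (fun s : ℝ => (c0 + c1 * s + c2 * s ^ 2 + c3 * s ^ 3 + c4 * s ^ 4) / (π * (s ^ 2 + c) ^ k)) t
      = ((c1 + 2 * c2 * t + 3 * c3 * t ^ 2 + 4 * c4 * t ^ 3) * (π * (t ^ 2 + c) ^ k)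
          - (c0 + c1 * t + c2 * t ^ 2 + c3 * t ^ 3 + c4 * t ^ 4)
            * (π * ((k : ℝ) * (t ^ 2 + c) ^ (k - 1) * (2 * t))))
        / (π * (t ^ 2 + c) ^ k) ^ 2 :=
  ((hasDerivAt_poly4 c0 c1 c2 c3 c4 t).div (hd_den c t k)
    (mul_ne_zero Real.pi_ne_zero (pow_ne_zero _ hc))).deriv

lemma coord0 : coordFun 0 = fun y1 _ => y1 := rfl
lemma coord1 : coordFun 1 = fun _ y2 => y2 := rfl

lemma sk_symm (i j : Fin 2) : stokesKernel i j = stokesKernel j i := by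
  funext y1 y2; unfold stokesKernel; ring

lemma deriv_congr_pos {f g : ℝ → ℝ} {y : ℝ} (hy : 0 < y) (h : ∀ t, 0 < t → f t = g t) :
    deriv f y = deriv g y := by
  apply Filter.EventuallyEq.deriv_eq
  filter_upwards [Ioi_mem_nhds hy] with t ht using h t ht

noncomputable def q0 : ℝ → ℝ → ℝ :=
  fun y1 y2 => (0 + (4 * y2) * y1 + 0 * y1 ^ 2 + 0 * y1 ^ 3 + 0 * y1 ^ 4) / (π * (y1 ^ 2 + y2 ^ 2) ^ 2)

noncomputable def q1 : ℝ → ℝ → ℝ :=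
  fun y1 y2 => ((2 * y2 ^ 2) + 0 * y1 + (-2) * y1 ^ 2 + 0 * y1 ^ 3 + 0 * y1 ^ 4) / (π * (y1 ^ 2 + y2 ^ 2) ^ 2)

lemma pd1_S00 (y1 y2 : ℝ) (h : y1 ^ 2 + y2 ^ 2 ≠ 0) :
    pd1 (stokesKernel 0 0) y1 y2 = (4 * y1 * y2 ^ 3 - 4 * y1 ^ 3 * y2) / (π * (y1 ^ 2 + y2 ^ 2) ^ 3) := by
  have heq : (fun t => stokesKernel 0 0 t y2)
      = fun t : ℝ => ((0) + (0) * t + (2 * y2) * t ^ 2 + (0) * t ^ 3 + (0) * t ^ 4)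
          / (π * (t ^ 2 + (y2 ^ 2)) ^ 2) := by
    funext t
    simp only [stokesKernel, coord0, coord1]
    ring
  rw [pd1, heq, deriv_p4 _ _ _ _ _ _ _ _ h]
  have h2 : y2 ^ 2 + y1 ^ 2 ≠ 0 := by rw [add_comm] at h; exact h
  field_simp
  ring

lemma pd2_S00 (y1 y2 : ℝ) (h : y2 ^ 2 + y1 ^ 2 ≠ 0) :
    pd2 (stokesKernel 0 0) y1 y2 = (2 * y1 ^ 4 - 6 * y1 ^ 2 * y2 ^ 2) / (π * (y1 ^ 2 + y2 ^ 2) ^ 3) := by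
  have heq : (fun t => stokesKernel 0 0 y1 t)
      = fun t : ℝ => ((0) + (2 * y1 ^ 2) * t + (0) * t ^ 2 + (0) * t ^ 3 + (0) * t ^ 4)
          / (π * (t ^ 2 + (y1 ^ 2)) ^ 2) := by
    funext t
    simp only [stokesKernel, coord0, coord1]
    ring
  rw [pd2, heq, deriv_p4 _ _ _ _ _ _ _ _ h]
  have h2 : y1 ^ 2 + y2 ^ 2 ≠ 0 := by rw [add_comm] at h; exact h
  field_simp
  ring

lemma pd1_S01 (y1 y2 : ℝ) (h : y1 ^ 2 + y2 ^ 2 ≠ 0) :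
    pd1 (stokesKernel 0 1) y1 y2 = (2 * y2 ^ 4 - 6 * y1 ^ 2 * y2 ^ 2) / (π * (y1 ^ 2 + y2 ^ 2) ^ 3) := by
  have heq : (fun t => stokesKernel 0 1 t y2)
      = fun t : ℝ => ((0) + (2 * y2 ^ 2) * t + (0) * t ^ 2 + (0) * t ^ 3 + (0) * t ^ 4)
          / (π * (t ^ 2 + (y2 ^ 2)) ^ 2) := by
    funext t
    simp only [stokesKernel, coord0, coord1]
    ring
  rw [pd1, heq, deriv_p4 _ _ _ _ _ _ _ _ h]
  have h2 : y2 ^ 2 + y1 ^ 2 ≠ 0 := by rw [add_comm] at h; exact h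
  field_simp
  ring

lemma pd2_S01 (y1 y2 : ℝ) (h : y2 ^ 2 + y1 ^ 2 ≠ 0) :
    pd2 (stokesKernel 0 1) y1 y2 = (4 * y1 ^ 3 * y2 - 4 * y1 * y2 ^ 3) / (π * (y1 ^ 2 + y2 ^ 2) ^ 3) := by
  have heq : (fun t => stokesKernel 0 1 y1 t)
      = fun t : ℝ => ((0) + (0) * t + (2 * y1) * t ^ 2 + (0) * t ^ 3 + (0) * t ^ 4)
          / (π * (t ^ 2 + (y1 ^ 2)) ^ 2) := by
    funext t
    simp only [stokesKernel, coord0, coord1]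
    ring
  rw [pd2, heq, deriv_p4 _ _ _ _ _ _ _ _ h]
  have h2 : y1 ^ 2 + y2 ^ 2 ≠ 0 := by rw [add_comm] at h; exact h
  field_simp
  ring

lemma pd1_S11 (y1 y2 : ℝ) (h : y1 ^ 2 + y2 ^ 2 ≠ 0) :
    pd1 (stokesKernel 1 1) y1 y2 = (-8 * y1 * y2 ^ 3) / (π * (y1 ^ 2 + y2 ^ 2) ^ 3) := by
  have heq : (fun t => stokesKernel 1 1 t y2)
      = fun t : ℝ => ((2 * y2 ^ 3) + (0) * t + (0) * t ^ 2 + (0) * t ^ 3 + (0) * t ^ 4)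
          / (π * (t ^ 2 + (y2 ^ 2)) ^ 2) := by
    funext t
    simp only [stokesKernel, coord0, coord1]
    ring
  rw [pd1, heq, deriv_p4 _ _ _ _ _ _ _ _ h]
  have h2 : y2 ^ 2 + y1 ^ 2 ≠ 0 := by rw [add_comm] at h; exact h
  field_simp
  ring

lemma pd2_S11 (y1 y2 : ℝ) (h : y2 ^ 2 + y1 ^ 2 ≠ 0) :
    pd2 (stokesKernel 1 1) y1 y2 = (6 * y1 ^ 2 * y2 ^ 2 - 2 * y2 ^ 4) / (π * (y1 ^ 2 + y2 ^ 2) ^ 3) := by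
  have heq : (fun t => stokesKernel 1 1 y1 t)
      = fun t : ℝ => ((0) + (0) * t + (0) * t ^ 2 + (2) * t ^ 3 + (0) * t ^ 4)
          / (π * (t ^ 2 + (y1 ^ 2)) ^ 2) := by
    funext t
    simp only [stokesKernel, coord0, coord1]
    ring
  rw [pd2, heq, deriv_p4 _ _ _ _ _ _ _ _ h]
  have h2 : y1 ^ 2 + y2 ^ 2 ≠ 0 := by rw [add_comm] at h; exact h
  field_simp
  ring

lemma pd1pd1_S00 (y1 y2 : ℝ) (hy2 : 0 < y2) :
    pd1 (pd1 (stokesKernel 0 0)) y1 y2 = (4 * y2 ^ 5 - 32 * y1 ^ 2 * y2 ^ 3 + 12 * y1 ^ 4 * y2) / (π * (y1 ^ 2 + y2 ^ 2) ^ 4) := by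
  have heq : (fun t => pd1 (stokesKernel 0 0) t y2)
      = fun t : ℝ => ((0) + (4 * y2 ^ 3) * t + (0) * t ^ 2 + (-(4 * y2)) * t ^ 3 + (0) * t ^ 4) / (π * (t ^ 2 + (y2 ^ 2)) ^ 3) := by
    funext t
    rw [pd1_S00 t y2 (by positivity)]
    ring
  rw [pd1, heq, deriv_p4 _ _ _ _ _ _ _ _ (by positivity)]
  have h : y1 ^ 2 + y2 ^ 2 ≠ 0 := by positivity
  field_simp
  ring

lemma pd2pd2_S00 (y1 y2 : ℝ) (hy2 : 0 < y2) :
    pd2 (pd2 (stokesKernel 0 0)) y1 y2 = (24 * y1 ^ 2 * y2 ^ 3 - 24 * y1 ^ 4 * y2) / (π * (y1 ^ 2 + y2 ^ 2) ^ 4) := by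
  rw [pd2]
  rw [deriv_congr_pos hy2 (g := fun t : ℝ => ((2 * y1 ^ 4) + (0) * t + (-(6 * y1 ^ 2)) * t ^ 2 + (0) * t ^ 3 + (0) * t ^ 4) / (π * (t ^ 2 + (y1 ^ 2)) ^ 3))
    (fun t ht => by rw [pd2_S00 y1 t (by positivity)]; ring)]
  rw [deriv_p4 _ _ _ _ _ _ _ _ (by positivity)]
  have h : y1 ^ 2 + y2 ^ 2 ≠ 0 := by positivity
  field_simp
  ring

lemma pd1pd1_S01 (y1 y2 : ℝ) (hy2 : 0 < y2) :
    pd1 (pd1 (stokesKernel 0 1)) y1 y2 = (-24 * y1 * y2 ^ 4 + 24 * y1 ^ 3 * y2 ^ 2) / (π * (y1 ^ 2 + y2 ^ 2) ^ 4) := by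
  have heq : (fun t => pd1 (stokesKernel 0 1) t y2)
      = fun t : ℝ => ((2 * y2 ^ 4) + (0) * t + (-(6 * y2 ^ 2)) * t ^ 2 + (0) * t ^ 3 + (0) * t ^ 4) / (π * (t ^ 2 + (y2 ^ 2)) ^ 3) := by
    funext t
    rw [pd1_S01 t y2 (by positivity)]
    ring
  rw [pd1, heq, deriv_p4 _ _ _ _ _ _ _ _ (by positivity)]
  have h : y1 ^ 2 + y2 ^ 2 ≠ 0 := by positivity
  field_simp
  ring

lemma pd2pd2_S01 (y1 y2 : ℝ) (hy2 : 0 < y2) :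
    pd2 (pd2 (stokesKernel 0 1)) y1 y2 = (12 * y1 * y2 ^ 4 - 32 * y1 ^ 3 * y2 ^ 2 + 4 * y1 ^ 5) / (π * (y1 ^ 2 + y2 ^ 2) ^ 4) := by
  rw [pd2]
  rw [deriv_congr_pos hy2 (g := fun t : ℝ => ((0) + (4 * y1 ^ 3) * t + (0) * t ^ 2 + (-(4 * y1)) * t ^ 3 + (0) * t ^ 4) / (π * (t ^ 2 + (y1 ^ 2)) ^ 3))
    (fun t ht => by rw [pd2_S01 y1 t (by positivity)]; ring)]
  rw [deriv_p4 _ _ _ _ _ _ _ _ (by positivity)]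
  have h : y1 ^ 2 + y2 ^ 2 ≠ 0 := by positivity
  field_simp
  ring

lemma pd1pd1_S11 (y1 y2 : ℝ) (hy2 : 0 < y2) :
    pd1 (pd1 (stokesKernel 1 1)) y1 y2 = (-8 * y2 ^ 5 + 40 * y1 ^ 2 * y2 ^ 3) / (π * (y1 ^ 2 + y2 ^ 2) ^ 4) := by
  have heq : (fun t => pd1 (stokesKernel 1 1) t y2)
      = fun t : ℝ => ((0) + (-(8 * y2 ^ 3)) * t + (0) * t ^ 2 + (0) * t ^ 3 + (0) * t ^ 4) / (π * (t ^ 2 + (y2 ^ 2)) ^ 3) := by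
    funext t
    rw [pd1_S11 t y2 (by positivity)]
    ring
  rw [pd1, heq, deriv_p4 _ _ _ _ _ _ _ _ (by positivity)]
  have h : y1 ^ 2 + y2 ^ 2 ≠ 0 := by positivity
  field_simp
  ring

lemma pd2pd2_S11 (y1 y2 : ℝ) (hy2 : 0 < y2) :
    pd2 (pd2 (stokesKernel 1 1)) y1 y2 = (4 * y2 ^ 5 - 32 * y1 ^ 2 * y2 ^ 3 + 12 * y1 ^ 4 * y2) / (π * (y1 ^ 2 + y2 ^ 2) ^ 4) := by
  rw [pd2]
  rw [deriv_congr_pos hy2 (g := fun t : ℝ => ((0) + (0) * t + (6 * y1 ^ 2) * t ^ 2 + (0) * t ^ 3 + (-2) * t ^ 4) / (π * (t ^ 2 + (y1 ^ 2)) ^ 3))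
    (fun t ht => by rw [pd2_S11 y1 t (by positivity)]; ring)]
  rw [deriv_p4 _ _ _ _ _ _ _ _ (by positivity)]
  have h : y1 ^ 2 + y2 ^ 2 ≠ 0 := by positivity
  field_simp
  ring

lemma pd1_q0 (y1 y2 : ℝ) (h : y1 ^ 2 + y2 ^ 2 ≠ 0) :
    pd1 q0 y1 y2 = (4 * y2 ^ 3 - 12 * y1 ^ 2 * y2) / (π * (y1 ^ 2 + y2 ^ 2) ^ 3) := by
  have heq : (fun t => q0 t y2)
      = fun t : ℝ => ((0) + (4 * y2) * t + (0) * t ^ 2 + (0) * t ^ 3 + (0) * t ^ 4)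
          / (π * (t ^ 2 + (y2 ^ 2)) ^ 2) := by
    funext t
    unfold q0
    ring
  rw [pd1, heq, deriv_p4 _ _ _ _ _ _ _ _ h]
  have h2 : y2 ^ 2 + y1 ^ 2 ≠ 0 := by rw [add_comm] at h; exact h
  field_simp
  ring

lemma pd2_q0 (y1 y2 : ℝ) (h : y2 ^ 2 + y1 ^ 2 ≠ 0) :
    pd2 q0 y1 y2 = (4 * y1 ^ 3 - 12 * y1 * y2 ^ 2) / (π * (y1 ^ 2 + y2 ^ 2) ^ 3) := by
  have heq : (fun t => q0 y1 t)
      = fun t : ℝ => ((0) + (4 * y1) * t + (0) * t ^ 2 + (0) * t ^ 3 + (0) * t ^ 4)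
          / (π * (t ^ 2 + (y1 ^ 2)) ^ 2) := by
    funext t
    unfold q0
    ring
  rw [pd2, heq, deriv_p4 _ _ _ _ _ _ _ _ h]
  have h2 : y1 ^ 2 + y2 ^ 2 ≠ 0 := by rw [add_comm] at h; exact h
  field_simp
  ring

lemma pd1_q1 (y1 y2 : ℝ) (h : y1 ^ 2 + y2 ^ 2 ≠ 0) :
    pd1 q1 y1 y2 = (4 * y1 ^ 3 - 12 * y1 * y2 ^ 2) / (π * (y1 ^ 2 + y2 ^ 2) ^ 3) := by
  have heq : (fun t => q1 t y2)
      = fun t : ℝ => ((2 * y2 ^ 2) + (0) * t + (-2) * t ^ 2 + (0) * t ^ 3 + (0) * t ^ 4)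
          / (π * (t ^ 2 + (y2 ^ 2)) ^ 2) := by
    funext t
    unfold q1
    ring
  rw [pd1, heq, deriv_p4 _ _ _ _ _ _ _ _ h]
  have h2 : y2 ^ 2 + y1 ^ 2 ≠ 0 := by rw [add_comm] at h; exact h
  field_simp
  ring

lemma pd2_q1 (y1 y2 : ℝ) (h : y2 ^ 2 + y1 ^ 2 ≠ 0) :
    pd2 q1 y1 y2 = (12 * y1 ^ 2 * y2 - 4 * y2 ^ 3) / (π * (y1 ^ 2 + y2 ^ 2) ^ 3) := by
  have heq : (fun t => q1 y1 t)
      = fun t : ℝ => ((-(2 * y1 ^ 2)) + (0) * t + (2) * t ^ 2 + (0) * t ^ 3 + (0) * t ^ 4)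
          / (π * (t ^ 2 + (y1 ^ 2)) ^ 2) := by
    funext t
    unfold q1
    ring
  rw [pd2, heq, deriv_p4 _ _ _ _ _ _ _ _ h]
  have h2 : y1 ^ 2 + y2 ^ 2 ≠ 0 := by rw [add_comm] at h; exact h
  field_simp
  ring

lemma q_smooth_aux (f : ℝ × ℝ → ℝ) (hf : ContDiff ℝ (⊤ : ℕ∞) f) :
    ContDiffOn ℝ (⊤ : ℕ∞) (fun p : ℝ × ℝ => f p / (π * (p.1 ^ 2 + p.2 ^ 2) ^ 2)) {p : ℝ × ℝ | 0 < p.2} := by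
  apply ContDiffOn.div hf.contDiffOn
  · exact (contDiff_const.mul (((contDiff_fst.pow 2).add (contDiff_snd.pow 2)).pow 2)).contDiffOn
  · intro p hp
    have h2 : (0 : ℝ) < p.2 := hp
    have : p.1 ^ 2 + p.2 ^ 2 ≠ 0 := by positivity
    exact mul_ne_zero Real.pi_ne_zero (pow_ne_zero _ this)

lemma q0_smooth : ContDiffOn ℝ (⊤ : ℕ∞) (fun p : ℝ × ℝ => q0 p.1 p.2) {p : ℝ × ℝ | 0 < p.2} := by
  unfold q0
  apply q_smooth_aux
  fun_prop

lemma q1_smooth : ContDiffOn ℝ (⊤ : ℕ∞) (fun p : ℝ × ℝ => q1 p.1 p.2) {p : ℝ × ℝ | 0 < p.2} := by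
  unfold q1
  apply q_smooth_aux
  fun_prop

/-- Each column of the Stokes kernel `G` is divergence free away from the origin (and,
`G` being symmetric, so is each row), and on the upper half-plane each column is the
velocity field of a solution of the homogeneous Stokes system: there is a smooth
pressure `qⱼ` with `Δ(G eⱼ) = ∇qⱼ` on `{y₂ > 0}`. -/
theorem stokesKernel_div_free_and_stokes :
    (∀ y1 y2 : ℝ, (y1, y2) ≠ ((0 : ℝ), (0 : ℝ)) → ∀ j : Fin 2,
      pd1 (stokesKernel 0 j) y1 y2 + pd2 (stokesKernel 1 j) y1 y2 = 0
      ∧ pd1 (stokesKernel j 0) y1 y2 + pd2 (stokesKernel j 1) y1 y2 = 0)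
    ∧ (∀ j : Fin 2, ∃ q : ℝ → ℝ → ℝ,
        ContDiffOn ℝ (⊤ : ℕ∞) (fun p : ℝ × ℝ => q p.1 p.2) {p : ℝ × ℝ | 0 < p.2}
        ∧ ∀ y1 y2 : ℝ, 0 < y2 →
          (pd1 (pd1 (stokesKernel 0 j)) y1 y2 + pd2 (pd2 (stokesKernel 0 j)) y1 y2
              = pd1 q y1 y2
            ∧ pd1 (pd1 (stokesKernel 1 j)) y1 y2 + pd2 (pd2 (stokesKernel 1 j)) y1 y2
              = pd2 q y1 y2)) := by
  constructor
  · intro y1 y2 hne j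
    have h : y1 ^ 2 + y2 ^ 2 ≠ 0 := by
      intro h0
      apply hne
      have h1 : y1 = 0 := by nlinarith [sq_nonneg y1, sq_nonneg y2]
      have h2 : y2 = 0 := by nlinarith [sq_nonneg y1, sq_nonneg y2]
      simp [h1, h2]
    have h' : y2 ^ 2 + y1 ^ 2 ≠ 0 := by rw [add_comm]; exact h
    fin_cases j
    · simp only [Fin.zero_eta, Fin.mk_one]
      refine ⟨?_, ?_⟩
      · rw [show stokesKernel (1 : Fin 2) 0 = stokesKernel 0 1 from sk_symm 1 0,
          pd1_S00 y1 y2 h, pd2_S01 y1 y2 h']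
        ring
      · rw [pd1_S00 y1 y2 h, pd2_S01 y1 y2 h']
        ring
    · simp only [Fin.zero_eta, Fin.mk_one]
      refine ⟨?_, ?_⟩
      · rw [pd1_S01 y1 y2 h, pd2_S11 y1 y2 h']
        ring
      · rw [show stokesKernel (1 : Fin 2) 0 = stokesKernel 0 1 from sk_symm 1 0,
          pd1_S01 y1 y2 h, pd2_S11 y1 y2 h']
        ring
  · intro j
    fin_cases j
    · simp only [Fin.zero_eta, Fin.mk_one]
      refine ⟨q0, q0_smooth, fun y1 y2 hy2 => ?_⟩
      have h : y1 ^ 2 + y2 ^ 2 ≠ 0 := by positivity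
      have h' : y2 ^ 2 + y1 ^ 2 ≠ 0 := by rw [add_comm]; exact h
      constructor
      · rw [pd1pd1_S00 y1 y2 hy2, pd2pd2_S00 y1 y2 hy2, pd1_q0 y1 y2 h]
        field_simp
        ring
      · rw [show stokesKernel (1 : Fin 2) 0 = stokesKernel 0 1 from sk_symm 1 0,
          pd1pd1_S01 y1 y2 hy2, pd2pd2_S01 y1 y2 hy2, pd2_q0 y1 y2 h']
        field_simp
        ring
    · simp only [Fin.zero_eta, Fin.mk_one]
      refine ⟨q1, q1_smooth, fun y1 y2 hy2 => ?_⟩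
      have h : y1 ^ 2 + y2 ^ 2 ≠ 0 := by positivity
      have h' : y2 ^ 2 + y1 ^ 2 ≠ 0 := by rw [add_comm]; exact h
      constructor
      · rw [pd1pd1_S01 y1 y2 hy2, pd2pd2_S01 y1 y2 hy2, pd1_q1 y1 y2 h]
        field_simp
        ring
      · rw [pd1pd1_S11 y1 y2 hy2, pd2pd2_S11 y1 y2 hy2, pd2_q1 y1 y2 h']
        field_simp
        ring
end

section
/- Linear variance growth for a decorrelated decomposition: let α > 1, κ > 0, M > 0, and let (g_j)_{j≥0} be functions in L²(μ) with ∫ g_j dμ = 0, ‖g_j‖²_{L²(μ)} ≤ M·2^{−jα} for all j, and such that for each j, ∫ (g_j∘τ_s)(g_j∘τ_{s'}) dμ = 0 whenever |s−s'| ≥ κ + 2^{j+1}. Let F = ∑_{j≥0} g_j (the series converges in L²(μ)). Then there is a constant C depending only on α, κ, M such that for every t ∈ ℝ, ∫ |∫₀ᵗ F(τ_s ω) ds|² dμ(ω) ≤ C |t|. -/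
/-!
Write `T h ω = ∫_{Ι 0 t} h (τ_s ω) ds`. By Fubini, `‖T h‖²_{L²(μ)}` is the integral over
`Ι 0 t × Ι 0 t` of the covariances `∫ h(τ_s ω) h(τ_{s'} ω) dμ`, each bounded by `‖h‖²` since
every `τ_s` preserves `μ`. For `g_j` the covariance vanishes off the strip `|s - s'| < L_j`,
`L_j = κ + 2^{j+1}`, whose area is at most `2 L_j |t|`; hence `‖T g_j‖ ≤ √(2 L_j M 2^{-jα} |t|)`,
and these bounds are summable because `α > 1`. Bounding every covariance gives
`‖T h‖ ≤ |t| ‖h‖`, so `T` is continuous on `L²(μ)` and the triangle inequality for the partial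
sums passes to the limit `F`.
-/

open MeasureTheory Filter Set Function Topology

namespace MeasureTheory

section MeasurePreservingFamily

variable {Ω S : Type*} [MeasurableSpace Ω] [MeasurableSpace S] {μ : Measure Ω}
  {σ : S → Ω → Ω}

theorem map_prod_uncurry_eq_smul [SFinite μ] (hσ : ∀ s, MeasurePreserving (σ s) μ μ)
    (hσm : Measurable (uncurry σ)) (ν : Measure S) [SFinite ν] :
    (ν.prod μ).map (uncurry σ) = ν univ • μ := by
  ext N hN
  have hpre : ∀ s, μ (σ s ⁻¹' N) = μ N := fun s =>
    (hσ s).measure_preimage hN.nullMeasurableSet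
  rw [Measure.map_apply hσm hN, Measure.prod_apply (hσm hN), Measure.smul_apply, smul_eq_mul]
  simp only [preimage_preimage, uncurry_apply_pair]
  simp [hpre, mul_comm]

theorem MemLp.comp_uncurry [SFinite μ] {E : Type*} [NormedAddCommGroup E] {p : ENNReal}
    {h : Ω → E} (hh : MemLp h p μ) (hσ : ∀ s, MeasurePreserving (σ s) μ μ)
    (hσm : Measurable (uncurry σ)) (ν : Measure S) [IsFiniteMeasure ν] :
    MemLp (fun q : S × Ω => h (σ q.1 q.2)) p (ν.prod μ) := by
  have := hh.smul_measure (measure_ne_top ν univ)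
  rw [← map_prod_uncurry_eq_smul hσ hσm] at this
  exact this.comp_of_map hσm.aemeasurable

theorem abs_integral_mul_comp_le {φ ψ : Ω → Ω} (hφ : MeasurePreserving φ μ μ)
    (hψ : MeasurePreserving ψ μ μ) {h : Ω → ℝ} (hh : MemLp h 2 μ) :
    |∫ ω, h (φ ω) * h (ψ ω) ∂μ| ≤ ∫ ω, h ω ^ 2 ∂μ := by
  have hinv : ∀ {χ : Ω → Ω}, MeasurePreserving χ μ μ → ∫ ω, h (χ ω) ^ 2 ∂μ = ∫ ω, h ω ^ 2 ∂μ :=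
    fun hχ => by
      rw [← integral_map (f := fun ω => h ω ^ 2) hχ.aemeasurable
        (by rw [hχ.map_eq]; exact hh.integrable_sq.aestronglyMeasurable), hχ.map_eq]
  have hφ2 : Integrable (fun ω => h (φ ω) ^ 2) μ := (hh.comp_measurePreserving hφ).integrable_sq
  have hψ2 : Integrable (fun ω => h (ψ ω) ^ 2) μ := (hh.comp_measurePreserving hψ).integrable_sq
  calc |∫ ω, h (φ ω) * h (ψ ω) ∂μ| ≤ ∫ ω, |h (φ ω) * h (ψ ω)| ∂μ :=
        abs_integral_le_integral_abs
    _ ≤ ∫ ω, (h (φ ω) ^ 2 + h (ψ ω) ^ 2) / 2 ∂μ := by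
        refine integral_mono_of_nonneg (ae_of_all _ fun _ => abs_nonneg _)
          ((hφ2.add hψ2).div_const 2) (ae_of_all _ fun ω => ?_)
        simp only [abs_mul]
        nlinarith [sq_nonneg (|h (φ ω)| - |h (ψ ω)|), sq_abs (h (φ ω)), sq_abs (h (ψ ω))]
    _ = ∫ ω, h ω ^ 2 ∂μ := by
        rw [integral_div, integral_add hφ2 hψ2, hinv hφ, hinv hψ]
        ring

end MeasurePreservingFamily

section L2

variable {X : Type*} [MeasurableSpace X] {μ : Measure X}

theorem MemLp.eLpNorm_two_eq {f : X → ℝ} (hf : MemLp f 2 μ) :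
    eLpNorm f 2 μ = ENNReal.ofReal √(∫ x, f x ^ 2 ∂μ) := by
  rw [hf.eLpNorm_eq_integral_rpow_norm two_ne_zero ENNReal.ofNat_ne_top, Real.sqrt_eq_rpow]
  norm_num

theorem MemLp.eLpNorm_two_le_ofReal_iff {f : X → ℝ} (hf : MemLp f 2 μ) {b : ℝ} (hb : 0 ≤ b) :
    eLpNorm f 2 μ ≤ ENNReal.ofReal b ↔ ∫ x, f x ^ 2 ∂μ ≤ b ^ 2 := by
  rw [hf.eLpNorm_two_eq, ENNReal.ofReal_le_ofReal_iff hb, Real.sqrt_le_left hb]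

theorem tendsto_eLpNorm_two_of_integral_sq {ι : Type*} {l : Filter ι} {f : ι → X → ℝ}
    (hf : ∀ i, MemLp (f i) 2 μ) (hlim : Tendsto (fun i => ∫ x, f i x ^ 2 ∂μ) l (𝓝 0)) :
    Tendsto (fun i => eLpNorm (f i) 2 μ) l (𝓝 0) := by
  simp only [fun i => (hf i).eLpNorm_two_eq]
  have hcont := (ENNReal.continuous_ofReal.comp Real.continuous_sqrt).tendsto 0
  simp only [comp_def, Real.sqrt_zero, ENNReal.ofReal_zero] at hcont
  exact hcont.comp hlim

end L2

section OrbitIntegral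

variable {Ω S : Type*} [MeasurableSpace S] {σ : S → Ω → Ω} {ν : Measure S}

noncomputable def orbitIntegral (σ : S → Ω → Ω) (ν : Measure S) (h : Ω → ℝ) (ω : Ω) : ℝ :=
  ∫ s, h (σ s ω) ∂ν

theorem sq_orbitIntegral [SFinite ν] (h : Ω → ℝ) (ω : Ω) :
    orbitIntegral σ ν h ω ^ 2 = ∫ z, h (σ z.1 ω) * h (σ z.2 ω) ∂(ν.prod ν) := by
  rw [sq, orbitIntegral, ← integral_prod_mul]

variable [MeasurableSpace Ω] {μ : Measure Ω} [SFinite μ] [IsFiniteMeasure ν]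

theorem ae_integrable_orbit {h : Ω → ℝ} (hh : Integrable h μ)
    (hσ : ∀ s, MeasurePreserving (σ s) μ μ) (hσm : Measurable (uncurry σ)) :
    ∀ᵐ ω ∂μ, Integrable (fun s => h (σ s ω)) ν :=
  (memLp_one_iff_integrable.1
    ((memLp_one_iff_integrable.2 hh).comp_uncurry hσ hσm ν)).prod_left_ae

theorem orbitIntegral_add_ae {h₁ h₂ : Ω → ℝ} (hh₁ : Integrable h₁ μ) (hh₂ : Integrable h₂ μ)
    (hσ : ∀ s, MeasurePreserving (σ s) μ μ) (hσm : Measurable (uncurry σ)) :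
    orbitIntegral σ ν (h₁ + h₂) =ᵐ[μ] orbitIntegral σ ν h₁ + orbitIntegral σ ν h₂ := by
  filter_upwards [ae_integrable_orbit (ν := ν) hh₁ hσ hσm, ae_integrable_orbit (ν := ν) hh₂ hσ hσm]
    with ω hω₁ hω₂
  exact integral_add hω₁ hω₂

theorem orbitIntegral_sum_ae {ι : Type*} (s : Finset ι) {h : ι → Ω → ℝ}
    (hh : ∀ i ∈ s, Integrable (h i) μ)
    (hσ : ∀ s, MeasurePreserving (σ s) μ μ) (hσm : Measurable (uncurry σ)) :
    orbitIntegral σ ν (∑ i ∈ s, h i) =ᵐ[μ] ∑ i ∈ s, orbitIntegral σ ν (h i) := by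
  have hslices : ∀ᵐ ω ∂μ, ∀ i ∈ s, Integrable (fun r => h i (σ r ω)) ν :=
    (eventually_all_finset s).2 fun i hi => ae_integrable_orbit (ν := ν) (hh i hi) hσ hσm
  filter_upwards [hslices] with ω hω
  simp only [orbitIntegral, Finset.sum_apply]
  exact integral_finsetSum s hω

theorem integrable_mul_comp_pair {h : Ω → ℝ} (hh : MemLp h 2 μ)
    (hσ : ∀ s, MeasurePreserving (σ s) μ μ) (hσm : Measurable (uncurry σ)) :
    Integrable (fun q : (S × S) × Ω => h (σ q.1.1 q.2) * h (σ q.1.2 q.2)) ((ν.prod ν).prod μ) := by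
  have hfst : Measurable (uncurry fun z : S × S => σ z.1) :=
    hσm.comp (measurable_fst.fst.prodMk measurable_snd)
  have hsnd : Measurable (uncurry fun z : S × S => σ z.2) :=
    hσm.comp (measurable_fst.snd.prodMk measurable_snd)
  exact (hh.comp_uncurry (fun z => hσ z.1) hfst (ν.prod ν)).integrable_mul
    (hh.comp_uncurry (fun z => hσ z.2) hsnd (ν.prod ν))

theorem memLp_orbitIntegral {h : Ω → ℝ} (hh : MemLp h 2 μ)
    (hσ : ∀ s, MeasurePreserving (σ s) μ μ) (hσm : Measurable (uncurry σ)) :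
    MemLp (orbitIntegral σ ν h) 2 μ := by
  have hmeas : AEStronglyMeasurable (orbitIntegral σ ν h) μ :=
    (hh.comp_uncurry hσ hσm ν).aestronglyMeasurable.prod_swap.integral_prod_right'
  refine (memLp_two_iff_integrable_sq hmeas).2 ?_
  simp only [sq_orbitIntegral]
  exact (integrable_mul_comp_pair (ν := ν) hh hσ hσm).integral_prod_right

theorem integral_sq_orbitIntegral {h : Ω → ℝ} (hh : MemLp h 2 μ)
    (hσ : ∀ s, MeasurePreserving (σ s) μ μ) (hσm : Measurable (uncurry σ)) :
    ∫ ω, orbitIntegral σ ν h ω ^ 2 ∂μ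
      = ∫ z, ∫ ω, h (σ z.1 ω) * h (σ z.2 ω) ∂μ ∂(ν.prod ν) := by
  have hY := integrable_mul_comp_pair (ν := ν) hh hσ hσm
  simp only [sq_orbitIntegral]
  exact (integral_prod_symm _ hY).symm.trans (integral_prod _ hY)

theorem integral_sq_orbitIntegral_le {h : Ω → ℝ} (hh : MemLp h 2 μ)
    (hσ : ∀ s, MeasurePreserving (σ s) μ μ) (hσm : Measurable (uncurry σ))
    {D : Set (S × S)} (hD : MeasurableSet D)
    (hvanish : ∀ z ∉ D, ∫ ω, h (σ z.1 ω) * h (σ z.2 ω) ∂μ = 0) :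
    ∫ ω, orbitIntegral σ ν h ω ^ 2 ∂μ ≤ (ν.prod ν).real D * ∫ ω, h ω ^ 2 ∂μ := by
  rw [integral_sq_orbitIntegral hh hσ hσm, ← smul_eq_mul, ← integral_indicator_const _ hD]
  refine integral_mono (integrable_mul_comp_pair hh hσ hσm).integral_prod_left
    ((integrable_const _).indicator hD) fun z => ?_
  by_cases hz : z ∈ D
  · rw [indicator_of_mem hz]
    exact (le_abs_self _).trans (abs_integral_mul_comp_le (hσ z.1) (hσ z.2) hh)
  · rw [indicator_of_notMem hz, hvanish z hz]

theorem eLpNorm_orbitIntegral_le {h : Ω → ℝ} (hh : MemLp h 2 μ)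
    (hσ : ∀ s, MeasurePreserving (σ s) μ μ) (hσm : Measurable (uncurry σ)) :
    eLpNorm (orbitIntegral σ ν h) 2 μ ≤ ENNReal.ofReal (ν.real univ) * eLpNorm h 2 μ := by
  have hsq : ∫ ω, orbitIntegral σ ν h ω ^ 2 ∂μ ≤ ν.real univ ^ 2 * ∫ ω, h ω ^ 2 ∂μ := by
    simpa [← univ_prod_univ, measureReal_prod_prod, sq] using
      integral_sq_orbitIntegral_le (ν := ν) hh hσ hσm MeasurableSet.univ (by simp)
  rw [hh.eLpNorm_two_eq, ← ENNReal.ofReal_mul measureReal_nonneg,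
    (memLp_orbitIntegral hh hσ hσm).eLpNorm_two_le_ofReal_iff (by positivity), mul_pow,
    Real.sq_sqrt (integral_nonneg fun _ => sq_nonneg _)]
  exact hsq

end OrbitIntegral

section Approximation

variable {Ω S : Type*} [MeasurableSpace Ω] [MeasurableSpace S] {μ : Measure Ω}
  [IsFiniteMeasure μ] {σ : S → Ω → Ω} {ν : Measure S} [IsFiniteMeasure ν]

theorem eLpNorm_orbitIntegral_le_sum_add {ι : Type*} (s : Finset ι) {g : ι → Ω → ℝ}
    {F : Ω → ℝ} (hg : ∀ j, MemLp (g j) 2 μ) (hF : MemLp F 2 μ)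
    (hσ : ∀ s, MeasurePreserving (σ s) μ μ) (hσm : Measurable (uncurry σ)) :
    eLpNorm (orbitIntegral σ ν F) 2 μ ≤ ∑ j ∈ s, eLpNorm (orbitIntegral σ ν (g j)) 2 μ
      + ENNReal.ofReal (ν.real univ) * eLpNorm (F - ∑ j ∈ s, g j) 2 μ := by
  set P := ∑ j ∈ s, g j
  have hP : MemLp P 2 μ := memLp_finsetSum' _ fun j _ => hg j
  have hsplit : orbitIntegral σ ν F =ᵐ[μ]
      ∑ j ∈ s, orbitIntegral σ ν (g j) + orbitIntegral σ ν (F - P) := by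
    have hint : ∀ {f : Ω → ℝ}, MemLp f 2 μ → Integrable f μ := fun hf => hf.integrable one_le_two
    filter_upwards [orbitIntegral_add_ae (ν := ν) (hint hP) (hint (hF.sub hP)) hσ hσm,
      orbitIntegral_sum_ae (ν := ν) s (fun j _ => hint (hg j)) hσ hσm] with ω hadd hsum
    calc orbitIntegral σ ν F ω = orbitIntegral σ ν (P + (F - P)) ω := by rw [add_sub_cancel]
      _ = _ := by rw [hadd]; exact congrArg (· + _) hsum
  have hmeas : ∀ j ∈ s, AEStronglyMeasurable (orbitIntegral σ ν (g j)) μ :=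
    fun j _ => (memLp_orbitIntegral (hg j) hσ hσm).1
  calc eLpNorm (orbitIntegral σ ν F) 2 μ
      = eLpNorm (∑ j ∈ s, orbitIntegral σ ν (g j) + orbitIntegral σ ν (F - P)) 2 μ :=
        eLpNorm_congr_ae hsplit
    _ ≤ eLpNorm (∑ j ∈ s, orbitIntegral σ ν (g j)) 2 μ
          + eLpNorm (orbitIntegral σ ν (F - P)) 2 μ :=
        eLpNorm_add_le (Finset.aestronglyMeasurable_sum _ hmeas)
          (memLp_orbitIntegral (hF.sub hP) hσ hσm).1 one_le_two
    _ ≤ _ := add_le_add (eLpNorm_sum_le hmeas one_le_two)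
        (eLpNorm_orbitIntegral_le (hF.sub hP) hσ hσm)

theorem eLpNorm_orbitIntegral_le_tsum {g : ℕ → Ω → ℝ} {F : Ω → ℝ}
    (hg : ∀ j, MemLp (g j) 2 μ) (hF : MemLp F 2 μ)
    (hσ : ∀ s, MeasurePreserving (σ s) μ μ) (hσm : Measurable (uncurry σ))
    (hlim : Tendsto (fun N => eLpNorm (F - ∑ j ∈ Finset.range N, g j) 2 μ) atTop (𝓝 0))
    {b : ℕ → ℝ} (hb : Summable b) (hb0 : ∀ j, 0 ≤ b j)
    (hgb : ∀ j, eLpNorm (orbitIntegral σ ν (g j)) 2 μ ≤ ENNReal.ofReal (b j)) :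
    eLpNorm (orbitIntegral σ ν F) 2 μ ≤ ENNReal.ofReal (∑' j, b j) := by
  have hpartial : ∀ N, ∑ j ∈ Finset.range N, eLpNorm (orbitIntegral σ ν (g j)) 2 μ
      ≤ ENNReal.ofReal (∑' j, b j) := fun N =>
    calc ∑ j ∈ Finset.range N, eLpNorm (orbitIntegral σ ν (g j)) 2 μ
        ≤ ∑ j ∈ Finset.range N, ENNReal.ofReal (b j) := Finset.sum_le_sum fun j _ => hgb j
      _ = ENNReal.ofReal (∑ j ∈ Finset.range N, b j) :=
          (ENNReal.ofReal_sum_of_nonneg fun j _ => hb0 j).symm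
      _ ≤ _ := ENNReal.ofReal_le_ofReal (hb.sum_le_tsum _ fun j _ => hb0 j)
  have hlim' := tendsto_const_nhds (x := ENNReal.ofReal (∑' j, b j)).add
    (ENNReal.Tendsto.const_mul hlim (Or.inr (ENNReal.ofReal_ne_top (r := ν.real univ))))
  rw [mul_zero, add_zero] at hlim'
  exact ge_of_tendsto' hlim' fun N =>
    (eLpNorm_orbitIntegral_le_sum_add _ hg hF hσ hσm).trans (by gcongr; exact hpartial N)

end Approximation

theorem measureReal_prod_setOf_abs_sub_lt_le {ν : Measure ℝ} [IsFiniteMeasure ν]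
    (hν : ν ≤ volume) {L : ℝ} (hL : 0 ≤ L) :
    (ν.prod ν).real {z | |z.1 - z.2| < L} ≤ 2 * L * ν.real univ := by
  have hD : MeasurableSet {z : ℝ × ℝ | |z.1 - z.2| < L} :=
    measurableSet_lt (measurable_fst.sub measurable_snd).abs measurable_const
  have hslice : ∀ s, ν (Prod.mk s ⁻¹' {z : ℝ × ℝ | |z.1 - z.2| < L}) ≤ ENNReal.ofReal (2 * L) :=
    fun s => calc
      ν (Prod.mk s ⁻¹' {z : ℝ × ℝ | |z.1 - z.2| < L}) = ν (Metric.ball s L) := by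
        simp only [preimage_ofPred_eq, Metric.ball, Real.dist_eq, abs_sub_comm]
      _ ≤ volume (Metric.ball s L) := hν _
      _ = ENNReal.ofReal (2 * L) := Real.volume_ball s L
  have hle : (ν.prod ν) {z | |z.1 - z.2| < L} ≤ ENNReal.ofReal (2 * L) * ν univ := by
    rw [Measure.prod_apply hD, ← lintegral_const]
    exact lintegral_mono hslice
  rw [measureReal_def, measureReal_def, ← ENNReal.toReal_ofReal (by positivity : 0 ≤ 2 * L),
    ← ENNReal.toReal_mul]
  exact ENNReal.toReal_mono (by finiteness) hle

theorem eLpNorm_orbitIntegral_le_of_decorrelated {Ω : Type*} [MeasurableSpace Ω]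
    {μ : Measure Ω} [SFinite μ] {τ : ℝ → Ω → Ω}
    (hτ : ∀ s, MeasurePreserving (τ s) μ μ) (hτm : Measurable (uncurry τ))
    {ν : Measure ℝ} [IsFiniteMeasure ν] (hν : ν ≤ volume) {h : Ω → ℝ} (hh : MemLp h 2 μ)
    {L : ℝ} (hL : 0 ≤ L) (hdec : ∀ s s', L ≤ |s - s'| → ∫ ω, h (τ s ω) * h (τ s' ω) ∂μ = 0)
    {B : ℝ} (hB : ∫ ω, h ω ^ 2 ∂μ ≤ B) :
    eLpNorm (orbitIntegral τ ν h) 2 μ ≤ ENNReal.ofReal √(2 * L * ν.real univ * B) := by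
  have hh2 : 0 ≤ ∫ ω, h ω ^ 2 ∂μ := integral_nonneg fun _ => sq_nonneg _
  rw [(memLp_orbitIntegral hh hτ hτm).eLpNorm_two_le_ofReal_iff (Real.sqrt_nonneg _),
    Real.sq_sqrt (by have := hh2.trans hB; positivity)]
  calc ∫ ω, orbitIntegral τ ν h ω ^ 2 ∂μ
      ≤ (ν.prod ν).real {z | |z.1 - z.2| < L} * ∫ ω, h ω ^ 2 ∂μ :=
        integral_sq_orbitIntegral_le hh hτ hτm
          (measurableSet_lt (measurable_fst.sub measurable_snd).abs measurable_const)
          fun z hz => hdec z.1 z.2 (not_lt.1 hz)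
    _ ≤ 2 * L * ν.real univ * B :=
        mul_le_mul (measureReal_prod_setOf_abs_sub_lt_le hν hL) hB hh2 (by positivity)

end MeasureTheory

theorem summable_sqrt_add_two_pow_mul_two_rpow {α κ : ℝ} (hα : 1 < α) (hκ : 0 ≤ κ) :
    Summable fun j : ℕ => √((κ + 2 ^ (j + 1)) * 2 ^ (-(j : ℝ) * α)) := by
  set r : ℝ := 2 ^ ((1 - α) / 2)
  have hr0 : 0 ≤ r := by positivity
  have hr1 : r < 1 := Real.rpow_lt_one_of_one_lt_of_neg one_lt_two (by linarith)
  refine ((summable_geometric_of_lt_one hr0 hr1).mul_left √(κ + 2)).of_nonneg_of_le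
    (fun j => Real.sqrt_nonneg _) fun j => ?_
  have hpow : (2 : ℝ) ^ j * 2 ^ (-(j : ℝ) * α) = (r ^ j) ^ 2 := by
    rw [← pow_mul, ← Real.rpow_natCast, ← Real.rpow_natCast, ← Real.rpow_mul (by norm_num),
      ← Real.rpow_add (by norm_num)]
    push_cast
    ring_nf
  rw [Real.sqrt_le_left (by positivity), mul_pow, Real.sq_sqrt (by positivity), ← hpow]
  have h2j : (1 : ℝ) ≤ 2 ^ j := one_le_pow₀ one_le_two
  have : κ + 2 ^ (j + 1) ≤ (κ + 2) * 2 ^ j := by rw [pow_succ]; nlinarith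
  calc (κ + 2 ^ (j + 1)) * 2 ^ (-(j : ℝ) * α) ≤ (κ + 2) * 2 ^ j * 2 ^ (-(j : ℝ) * α) := by
        gcongr
    _ = _ := by ring

/-- Linear variance growth for a decorrelated decomposition: if `F = ∑ⱼ gⱼ` in `L²(μ)`
where the `gⱼ` are centered, `‖gⱼ‖²_{L²} ≤ M 2^{-jα}`, and `gⱼ` decorrelates at range
`κ + 2^{j+1}`, then `∫ |∫₀ᵗ F∘τ_s ds|² dμ ≤ C|t|` with `C` depending only on
`α`, `κ`, `M`. -/
theorem linear_variance_growth_decorrelated_decomposition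
    (α κ M : ℝ) (hα : 1 < α) (hκ : 0 < κ) (hM : 0 < M) :
    ∃ C : ℝ, 0 < C ∧
      ∀ (Ω : Type) (_ : MeasurableSpace Ω) (μ : Measure Ω), IsProbabilityMeasure μ →
        ∀ (τ : ℝ → Ω → Ω), (∀ s : ℝ, MeasurePreserving (τ s) μ μ) →
          Measurable (fun p : ℝ × Ω => τ p.1 p.2) →
        ∀ g : ℕ → Ω → ℝ, (∀ j, MemLp (g j) 2 μ) →
          (∀ j, ∫ ω, g j ω ∂μ = 0) →
          (∀ j, ∫ ω, (g j ω) ^ 2 ∂μ ≤ M * 2 ^ (-(j : ℝ) * α)) →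
          (∀ j, ∀ s s' : ℝ, κ + 2 ^ (j + 1) ≤ |s - s'| →
            ∫ ω, g j (τ s ω) * g j (τ s' ω) ∂μ = 0) →
        ∀ F : Ω → ℝ, MemLp F 2 μ →
          Tendsto (fun N : ℕ =>
              ∫ ω, (F ω - ∑ j ∈ Finset.range N, g j ω) ^ 2 ∂μ) atTop (nhds 0) →
        ∀ t : ℝ,
          ∫ ω, (∫ s in (0:ℝ)..t, F (τ s ω)) ^ 2 ∂μ ≤ C * |t| := by
  set w : ℕ → ℝ := fun j => √((κ + 2 ^ (j + 1)) * 2 ^ (-(j : ℝ) * α))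
  have hw : Summable w := summable_sqrt_add_two_pow_mul_two_rpow hα hκ.le
  have hw_pos : 0 < ∑' j, w j :=
    hw.tsum_pos (fun _ => Real.sqrt_nonneg _) 0 (Real.sqrt_pos.2 (by positivity))
  refine ⟨2 * M * (∑' j, w j) ^ 2, by positivity, ?_⟩
  intro Ω _ μ _ τ hτ hτm g hg _ hg_var hg_dec F hF hF_lim t
  set ν := volume.restrict (uIoc 0 t)
  have : IsFiniteMeasure ν := isFiniteMeasure_restrict.2 (by simp)
  have hν : ν.real univ = |t| := by simp [ν, measureReal_def, Real.volume_uIoc]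
  have hblock : ∀ j, eLpNorm (orbitIntegral τ ν (g j)) 2 μ ≤
      ENNReal.ofReal (√(2 * M * |t|) * w j) := fun j =>
    (eLpNorm_orbitIntegral_le_of_decorrelated hτ hτm Measure.restrict_le_self (hg j)
      (by positivity) (hg_dec j) (hg_var j)).trans_eq <| by
        rw [hν, ← Real.sqrt_mul (by positivity)]; ring_nf
  have hT := eLpNorm_orbitIntegral_le_tsum hg hF hτ hτm
    (tendsto_eLpNorm_two_of_integral_sq (fun N => hF.sub (memLp_finsetSum' _ fun j _ => hg j))
      (by simpa using hF_lim)) (hw.mul_left _) (fun j => by positivity) hblock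
  rw [tsum_mul_left, (memLp_orbitIntegral hF hτ hτm).eLpNorm_two_le_ofReal_iff (by positivity),
    mul_pow, Real.sq_sqrt (by positivity)] at hT
  calc ∫ ω, (∫ s in (0:ℝ)..t, F (τ s ω)) ^ 2 ∂μ = ∫ ω, orbitIntegral τ ν F ω ^ 2 ∂μ := by
        simp only [← sq_abs (∫ s in (0:ℝ)..t, _),
          intervalIntegral.abs_integral_eq_abs_integral_uIoc, sq_abs, orbitIntegral, ν]
    _ ≤ _ := hT
    _ = _ := by ring
end

section
/- Finite-range independence implies ergodicity of the shift: let μ be a probability measure on the product measurable space ℝ^ℝ (with the cylindrical σ-algebra) that is invariant under every shift τ_h, where τ_h(ω) = ω(·+h). Suppose there exists κ > 0 such that for all real a ≤ b with b−a ≥ κ, the σ-algebra generated by the coordinate maps ω ↦ ω(s) for s ≤ a and the σ-algebra generated by the coordinate maps ω ↦ ω(s) for s ≥ b are independent under μ. Then every measurable set A ⊆ ℝ^ℝ satisfying τ_h^{−1}(A) = A for all h ∈ ℝ has μ(A) = 0 or μ(A) = 1. -/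
/-!
Both the past σ-algebras and the future σ-algebras increase to the product σ-algebra, so a
measurable set `A` is approximated in measure by a past event `B` and by a future event `C`.
Since `A` is shift-invariant, shifting `C` far to the right keeps it close to `A` while making
it independent of `B`; hence `μ A` is arbitrarily close to `μ B * μ C`, so `μ A = (μ A)²`.
-/

open MeasureTheory

/-- The shift `τ_h ω = ω(· + h)` on the path space `ℝ^ℝ`. -/
def pathShift (h : ℝ) : (ℝ → ℝ) → (ℝ → ℝ) := fun ω => fun t => ω (t + h)

/-- The σ-algebra on `ℝ^ℝ` generated by the coordinates `ω ↦ ω(s)`, `s ≤ a`. -/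
def pastSigma (a : ℝ) : MeasurableSpace (ℝ → ℝ) :=
  ⨆ s ∈ Set.Iic a, MeasurableSpace.comap (fun ω : ℝ → ℝ => ω s) inferInstance

/-- The σ-algebra on `ℝ^ℝ` generated by the coordinates `ω ↦ ω(s)`, `s ≥ b`. -/
def futureSigma (b : ℝ) : MeasurableSpace (ℝ → ℝ) :=
  ⨆ s ∈ Set.Ici b, MeasurableSpace.comap (fun ω : ℝ → ℝ => ω s) inferInstance

open MeasurableSpace ProbabilityTheory Set
open scoped symmDiff

section

variable {Ω ι : Type*}

lemma isSetAlgebra_iUnion_measurableSet [Nonempty ι] {m : ι → MeasurableSpace Ω}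
    (hm : Directed (· ≤ ·) m) : IsSetAlgebra (⋃ i, {s | MeasurableSet[m i] s}) where
  empty_mem := mem_iUnion.2 ⟨Classical.arbitrary ι, @MeasurableSet.empty _ (m _)⟩
  compl_mem s hs := by
    obtain ⟨i, hi⟩ := mem_iUnion.1 hs
    exact mem_iUnion.2 ⟨i, hi.compl⟩
  union_mem s t hs ht := by
    obtain ⟨i, hi⟩ := mem_iUnion.1 hs
    obtain ⟨j, hj⟩ := mem_iUnion.1 ht
    obtain ⟨k, hik, hjk⟩ := hm i j
    exact mem_iUnion.2 ⟨k, (hik _ hi).union (hjk _ hj)⟩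

variable [mΩ : MeasurableSpace Ω]

lemma exists_measurableSet_measureReal_symmDiff_lt [Nonempty ι] {m : ι → MeasurableSpace Ω}
    (hm : Directed (· ≤ ·) m) (hgen : ⨆ i, m i = mΩ) (μ : Measure Ω) [IsFiniteMeasure μ]
    {s : Set Ω} (hs : MeasurableSet s) {ε : ℝ} (hε : 0 < ε) :
    ∃ i t, MeasurableSet[m i] t ∧ μ.real (s ∆ t) < ε := by
  have hdense := Measure.MeasureDense.of_generateFrom_isSetAlgebra_finite μ
    (isSetAlgebra_iUnion_measurableSet hm) ((generateFrom_iUnion_measurableSet m).trans hgen).symm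
  obtain ⟨t, ht, hst⟩ := hdense.approx s hs (measure_ne_top μ s) ε hε
  obtain ⟨i, hi⟩ := mem_iUnion.1 ht
  exact ⟨i, t, hi, ENNReal.toReal_lt_of_lt_ofReal hst⟩

lemma abs_measureReal_sub_le_measureReal_symmDiff_of_isFiniteMeasure (μ : Measure Ω)
    [IsFiniteMeasure μ] (s t : Set Ω) : |μ.real s - μ.real t| ≤ μ.real (s ∆ t) := by
  have key : ∀ s t : Set Ω, μ.real s ≤ μ.real t + μ.real (s ∆ t) := fun s t =>
    calc μ.real s ≤ μ.real (t ∪ s ∆ t) := measureReal_mono (by simp [symmDiff_def]; grind)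
      _ ≤ μ.real t + μ.real (s ∆ t) := measureReal_union_le _ _
  have hts := key t s
  rw [symmDiff_comm] at hts
  rw [abs_sub_le_iff]
  constructor <;> linarith [key s t]

lemma measure_eq_zero_or_one_of_forall_indepSet_approx (μ : Measure Ω) [IsProbabilityMeasure μ]
    {A : Set Ω}
    (h : ∀ ε > 0, ∃ B C, IndepSet B C μ ∧ μ.real (A ∆ B) < ε ∧ μ.real (A ∆ C) < ε) :
    μ A = 0 ∨ μ A = 1 := by
  have hdist := abs_measureReal_sub_le_measureReal_symmDiff_of_isFiniteMeasure μ
  have hidem : IsIdempotentElem (μ.real A) := by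
    refine eq_of_forall_dist_le fun ε hε => ?_
    obtain ⟨B, C, hBC, hAB, hAC⟩ := h (ε / 4) (by positivity)
    have hB := (hdist A B).trans_lt hAB
    have hC := (hdist A C).trans_lt hAC
    have hBC : |μ.real A - μ.real B * μ.real C| < ε / 2 := by
      have hsub : A ∆ (B ∩ C) ⊆ A ∆ B ∪ A ∆ C := by
        intro ω; simp only [mem_symmDiff, mem_union, mem_inter_iff]; tauto
      have hmul : μ.real (B ∩ C) = μ.real B * μ.real C := by
        simp only [measureReal_def, hBC.measure_inter_eq_mul, ENNReal.toReal_mul]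
      calc |μ.real A - μ.real B * μ.real C| = |μ.real A - μ.real (B ∩ C)| := by rw [hmul]
        _ ≤ μ.real (A ∆ B) + μ.real (A ∆ C) :=
            (hdist A _).trans ((measureReal_mono hsub).trans (measureReal_union_le _ _))
        _ < ε / 2 := by linarith
    have hA₀ : 0 ≤ μ.real A := measureReal_nonneg
    have hB₀ : 0 ≤ μ.real B := measureReal_nonneg
    have hA₁ : μ.real A ≤ 1 := measureReal_le_one
    have hC₁ : μ.real C ≤ 1 := measureReal_le_one
    rw [abs_lt] at hB hC hBC
    rw [Real.dist_eq, abs_le]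
    constructor <;> nlinarith
  rcases IsIdempotentElem.iff_eq_zero_or_one.1 hidem with h0 | h1
  · exact Or.inl (by rw [← ofReal_measureReal, h0, ENNReal.ofReal_zero])
  · exact Or.inr (by rw [← ofReal_measureReal, h1, ENNReal.ofReal_one])

end


lemma pastSigma_mono : Monotone pastSigma := fun _ _ hab =>
  iSup₂_le fun s hs => le_iSup₂_of_le (f := fun s (_ : s ∈ Iic _) =>
    MeasurableSpace.comap (fun ω : ℝ → ℝ => ω s) inferInstance) s (le_trans hs hab) le_rfl

lemma futureSigma_antitone : Antitone futureSigma := fun _ _ hab =>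
  iSup₂_le fun s hs => le_iSup₂_of_le (f := fun s (_ : s ∈ Ici _) =>
    MeasurableSpace.comap (fun ω : ℝ → ℝ => ω s) inferInstance) s (le_trans hab hs) le_rfl

lemma iSup_pastSigma : ⨆ a, pastSigma a = MeasurableSpace.pi :=
  le_antisymm (iSup_le fun _ => iSup₂_le fun s _ => le_iSup_of_le s le_rfl)
    (iSup_le fun s => le_iSup_of_le s (le_iSup₂_of_le (f := fun t (_ : t ∈ Iic s) =>
      MeasurableSpace.comap (fun ω : ℝ → ℝ => ω t) inferInstance) s self_mem_Iic le_rfl))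

lemma iSup_futureSigma : ⨆ b, futureSigma b = MeasurableSpace.pi :=
  le_antisymm (iSup_le fun _ => iSup₂_le fun s _ => le_iSup_of_le s le_rfl)
    (iSup_le fun s => le_iSup_of_le s (le_iSup₂_of_le (f := fun t (_ : t ∈ Ici s) =>
      MeasurableSpace.comap (fun ω : ℝ → ℝ => ω t) inferInstance) s self_mem_Ici le_rfl))

lemma futureSigma_le (b : ℝ) : futureSigma b ≤ MeasurableSpace.pi :=
  iSup_futureSigma ▸ le_iSup futureSigma b

lemma comap_pathShift_futureSigma_le (h b : ℝ) :
    MeasurableSpace.comap (pathShift h) (futureSigma b) ≤ futureSigma (b + h) := by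
  simp only [futureSigma, comap_iSup, comap_comp]
  exact iSup₂_le fun s hs => le_iSup₂_of_le (f := fun t (_ : t ∈ Ici (b + h)) =>
    MeasurableSpace.comap (fun ω : ℝ → ℝ => ω t) inferInstance) (s + h)
    ((add_le_add_iff_right h).2 hs) le_rfl

lemma MeasurableSet.pathShift_preimage_futureSigma {h b : ℝ} {C : Set (ℝ → ℝ)}
    (hC : MeasurableSet[futureSigma b] C) :
    MeasurableSet[futureSigma (b + h)] (pathShift h ⁻¹' C) :=
  comap_pathShift_futureSigma_le h b _ ⟨C, hC, rfl⟩

/-- Finite-range independence implies ergodicity of the shift: a shift-invariant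
probability measure on `ℝ^ℝ` whose past before `a` and future after `b` are independent
whenever `b - a ≥ κ` gives measure `0` or `1` to every shift-invariant measurable set. -/
theorem finite_range_independence_implies_ergodic
    (μ : Measure (ℝ → ℝ)) [IsProbabilityMeasure μ]
    (hinv : ∀ h : ℝ, MeasurePreserving (pathShift h) μ μ)
    (κ : ℝ) (hκ : 0 < κ)
    (hind : ∀ a b : ℝ, a ≤ b → κ ≤ b - a →
      ProbabilityTheory.Indep (pastSigma a) (futureSigma b) μ)
    (A : Set (ℝ → ℝ)) (hA : MeasurableSet A)
    (hAinv : ∀ h : ℝ, pathShift h ⁻¹' A = A) :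
    μ A = 0 ∨ μ A = 1 := by
  refine measure_eq_zero_or_one_of_forall_indepSet_approx μ fun ε hε => ?_
  obtain ⟨a, B, hB, hAB⟩ := exists_measurableSet_measureReal_symmDiff_lt
    pastSigma_mono.directed_le iSup_pastSigma μ hA hε
  obtain ⟨b, C, hC, hAC⟩ := exists_measurableSet_measureReal_symmDiff_lt
    futureSigma_antitone.directed_le iSup_futureSigma μ hA hε
  -- Shifting `C` by `a + κ - b` moves it `κ` past `a` without changing its distance to `A`.
  set h := a + κ - b
  have hC' : MeasurableSet[futureSigma (a + κ)] (pathShift h ⁻¹' C) := by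
    have hshift := hC.pathShift_preimage_futureSigma (h := h)
    rwa [show b + h = a + κ by ring] at hshift
  refine ⟨B, pathShift h ⁻¹' C,
    (hind a (a + κ) (by linarith) (by simp)).indepSet_of_measurableSet hB hC', hAB, ?_⟩
  rwa [← hAinv h, ← preimage_symmDiff, measureReal_def, (hinv h).measure_preimage
    (hA.symmDiff (futureSigma_le b _ hC)).nullMeasurableSet, ← measureReal_def]
end

section
/- Uniform interior measure of a Lipschitz epigraph: for every K > 0 there exists η > 0, depending only on K, such that for every K-Lipschitz function ω : ℝ → ℝ, every point x = (x₁,x₂) ∈ ℝ² with x₂ ≥ ω(x₁), and every r > 0, the two-dimensional Lebesgue measure of the set { y ∈ ℝ² : |y − x| < r and y₂ > ω(y₁) } is at least η r². -/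
open MeasureTheory Metric Set
open scoped NNReal

/-!
Above a point `x = (x₁, x₂)` with `ω x₁ ≤ x₂`, the Lipschitz bound `ω y₁ ≤ x₂ + K a` for
`|y₁ - x₁| ≤ a` shows that the square `(x₁, x₁ + a) × (x₂ + K a, x₂ + (K + 1) a)` lies strictly
above the graph. It also lies in the ball of radius `(K + 1) a` about `x` (a square, for the sup
metric of `ℝ × ℝ`), so with `a = r / (K + 1)` its area `r² / (K + 1)²` bounds the measure from below.
-/

theorem LipschitzWith.closedBall_prod_Ioi_subset_epigraph {α : Type*} [PseudoMetricSpace α]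
    {ω : α → ℝ} {K : ℝ≥0} (hω : LipschitzWith K ω) {x₁ : α} {x₂ : ℝ} (hx : ω x₁ ≤ x₂)
    (a : ℝ) : closedBall x₁ a ×ˢ Ioi (x₂ + K * a) ⊆ {y | ω y.1 < y.2} := by
  rintro ⟨y₁, y₂⟩ ⟨hy₁, hy₂⟩
  have hdist : dist (ω y₁) (ω x₁) ≤ K * a :=
    (hω.dist_le_mul y₁ x₁).trans (mul_le_mul_of_nonneg_left hy₁ K.coe_nonneg)
  rw [Real.dist_eq] at hdist
  show ω y₁ < y₂
  linarith [le_abs_self (ω y₁ - ω x₁), mem_Ioi.mp hy₂]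

theorem LipschitzWith.ofReal_sq_le_volume_ball_inter_epigraph {ω : ℝ → ℝ} {K : ℝ≥0}
    (hω : LipschitzWith K ω) {x₁ x₂ : ℝ} (hx : ω x₁ ≤ x₂) {a : ℝ} (ha : 0 < a) :
    ENNReal.ofReal (a ^ 2) ≤ volume (ball (x₁, x₂) ((K + 1) * a) ∩ {y | ω y.1 < y.2}) := by
  have hKa : 0 ≤ (K : ℝ) * a := mul_nonneg K.coe_nonneg ha.le
  have hsquare : Ioo x₁ (x₁ + a) ×ˢ Ioo (x₂ + K * a) (x₂ + (K + 1) * a)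
      ⊆ ball (x₁, x₂) ((K + 1) * a) ∩ {y | ω y.1 < y.2} := by
    rintro ⟨y₁, y₂⟩ ⟨⟨h₁, h₁'⟩, ⟨h₂, h₂'⟩⟩
    have hy₁ : dist y₁ x₁ ≤ a := by rw [Real.dist_eq, abs_le]; constructor <;> linarith
    refine ⟨?_, hω.closedBall_prod_Ioi_subset_epigraph hx a ⟨hy₁, h₂⟩⟩
    rw [← ball_prod_same]
    constructor <;> rw [mem_ball, Real.dist_eq, abs_lt] <;> constructor <;> nlinarith
  calc ENNReal.ofReal (a ^ 2)
      = volume (Ioo x₁ (x₁ + a) ×ˢ Ioo (x₂ + K * a) (x₂ + (K + 1) * a)) := by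
        rw [Measure.volume_eq_prod, Measure.prod_prod, Real.volume_Ioo, Real.volume_Ioo,
          ← ENNReal.ofReal_mul (by linarith)]
        ring_nf
    _ ≤ _ := measure_mono hsquare

/-- Uniform interior measure of a Lipschitz epigraph: for every `K > 0` there is
`η > 0`, depending only on `K`, such that for every `K`-Lipschitz `ω : ℝ → ℝ`, every
point `x` on or above the graph of `ω`, and every radius `r > 0`, the part of the open
disc `D(x,r)` lying strictly above the graph has area at least `η r²`. -/
theorem lipschitz_epigraph_uniform_interior_measure (K : ℝ) (hK : 0 < K) :
    ∃ η : ℝ, 0 < η ∧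
      ∀ ω : ℝ → ℝ, (∀ s t : ℝ, |ω s - ω t| ≤ K * |s - t|) →
      ∀ x1 x2 : ℝ, ω x1 ≤ x2 → ∀ r : ℝ, 0 < r →
        ENNReal.ofReal (η * r ^ 2)
          ≤ volume {y : ℝ × ℝ | dist y (x1, x2) < r ∧ ω y.1 < y.2} := by
  lift K to ℝ≥0 using hK.le
  have hK₁ : (0 : ℝ) < K + 1 := by positivity
  refine ⟨1 / (K + 1) ^ 2, by positivity, fun ω hω x1 x2 hx r hr => ?_⟩
  have hLip : LipschitzWith K ω :=
    LipschitzWith.of_dist_le_mul fun s t => by simpa only [Real.dist_eq] using hω s t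
  have hr_eq : r = (K + 1) * (r / (K + 1)) := by field_simp
  have hη : 1 / (K + 1) ^ 2 * r ^ 2 = (r / (K + 1)) ^ 2 := by rw [div_pow]; ring
  have h := hLip.ofReal_sq_le_volume_ball_inter_epigraph hx (div_pos hr hK₁)
  rwa [← hr_eq, ← hη] at h
end

section
/- Stationary covariance and derivatives in mean square: let H be a real Hilbert space, n ≥ 1, and let X : ℝ → H be n-times differentiable (as a map into H). Suppose there is a function ρ : ℝ → ℝ with ⟨X(s), X(t)⟩ = ρ(t − s) for all s, t ∈ ℝ. Then ρ is 2n-times differentiable and, for every t ∈ ℝ, ‖X^{(n)}(t)‖² = (−1)^n ρ^{(2n)}(0). -/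
/-!
For every `s`, `ρ u = ⟪X s, X (u + s)⟫`, so differentiating `k ≤ n` times in `u` puts the
derivatives on the second factor. Reading the `n`-th derivative the other way round,
`ρ⁽ⁿ⁾ v = ⟪X⁽ⁿ⁾ t, X (t - v)⟫` for every `t`, and `j ≤ n` further derivatives move onto the
first factor, each contributing a sign `-1`. At `v = 0`, `j = n` this is `(-1)ⁿ ‖X⁽ⁿ⁾ t‖²`.
-/

/-- Unlike the `ContDiff` versions in Mathlib, this needs no continuity of the `m`-th
derivative of `f`. -/
theorem ContinuousLinearMap.iteratedDeriv_comp_left {𝕜 E F : Type*} [NontriviallyNormedField 𝕜]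
    [NormedAddCommGroup E] [NormedSpace 𝕜 E] [NormedAddCommGroup F] [NormedSpace 𝕜 F]
    (L : E →L[𝕜] F) {f : 𝕜 → E} {m : ℕ} (hf : ∀ k < m, Differentiable 𝕜 (iteratedDeriv k f))
    {k : ℕ} (hk : k ≤ m) :
    iteratedDeriv k (fun t => L (f t)) = fun t => L (iteratedDeriv k f t) := by
  induction k with
  | zero => simp
  | succ k ih =>
    ext t
    rw [iteratedDeriv_succ, ih (by omega), iteratedDeriv_succ]
    exact (L.hasFDerivAt.comp_hasDerivAt t (hf k hk t).hasDerivAt).deriv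

theorem iteratedDeriv_add_eq_iteratedDeriv_iteratedDeriv {𝕜 F : Type*}
    [NontriviallyNormedField 𝕜] [NormedAddCommGroup F] [NormedSpace 𝕜 F] (f : 𝕜 → F) (m k : ℕ) :
    iteratedDeriv (m + k) f = iteratedDeriv k (iteratedDeriv m f) := by
  simp only [iteratedDeriv_eq_iterate, add_comm m, Function.iterate_add_apply]

section StationaryCovariance

variable {H : Type*} [NormedAddCommGroup H] [InnerProductSpace ℝ H] {n : ℕ} {X : ℝ → H}
  {ρ : ℝ → ℝ}

theorem iteratedDeriv_eq_inner_iteratedDeriv_comp_add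
    (hX : ∀ k < n, Differentiable ℝ (iteratedDeriv k X))
    (hρ : ∀ s t, inner ℝ (X s) (X t) = ρ (t - s)) {k : ℕ} (hk : k ≤ n) (s : ℝ) :
    iteratedDeriv k ρ = fun u => inner ℝ (X s) (iteratedDeriv k X (u + s)) := by
  have hρs : ρ = fun u => innerSL ℝ (X s) (X (u + s)) := by
    ext u
    simp [hρ]
  rw [hρs, iteratedDeriv_comp_add_const (f := fun v => innerSL ℝ (X s) (X v)),
    (innerSL ℝ (X s)).iteratedDeriv_comp_left hX hk]
  rfl

theorem iteratedDeriv_add_eq_inner_iteratedDeriv_comp_sub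
    (hX : ∀ k < n, Differentiable ℝ (iteratedDeriv k X))
    (hρ : ∀ s t, inner ℝ (X s) (X t) = ρ (t - s)) {j : ℕ} (hj : j ≤ n) (t : ℝ) :
    iteratedDeriv (n + j) ρ =
      fun v => (-1) ^ j * inner ℝ (iteratedDeriv n X t) (iteratedDeriv j X (t - v)) := by
  have hρn : iteratedDeriv n ρ = fun v => innerSL ℝ (iteratedDeriv n X t) (X (t - v)) := by
    ext v
    simp [iteratedDeriv_eq_inner_iteratedDeriv_comp_add hX hρ le_rfl (t - v), real_inner_comm]
  rw [iteratedDeriv_add_eq_iteratedDeriv_iteratedDeriv, hρn,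
    iteratedDeriv_comp_const_sub (f := fun v => innerSL ℝ (iteratedDeriv n X t) (X v)),
    (innerSL ℝ (iteratedDeriv n X t)).iteratedDeriv_comp_left hX hj]
  rfl

end StationaryCovariance

theorem stationary_covariance_iterated_deriv_general
    {H : Type*} [NormedAddCommGroup H] [InnerProductSpace ℝ H]
    (n : ℕ)
    (X : ℝ → H) (hX : ∀ k < n, Differentiable ℝ (iteratedDeriv k X))
    (ρ : ℝ → ℝ) (hρ : ∀ s t : ℝ, inner ℝ (X s) (X t) = ρ (t - s)) :
    (∀ k < 2 * n, Differentiable ℝ (iteratedDeriv k ρ))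
    ∧ ∀ t : ℝ, ‖iteratedDeriv n X t‖ ^ 2 = (-1 : ℝ) ^ n * iteratedDeriv (2 * n) ρ 0 := by
  refine ⟨fun k hk => ?_, fun t => ?_⟩
  · rcases lt_or_ge k n with hkn | hnk
    · rw [iteratedDeriv_eq_inner_iteratedDeriv_comp_add hX hρ hkn.le 0]
      exact (differentiable_const _).inner ℝ ((hX k hkn).comp (differentiable_id.add_const _))
    · obtain ⟨j, rfl⟩ := Nat.exists_eq_add_of_le hnk
      rw [iteratedDeriv_add_eq_inner_iteratedDeriv_comp_sub hX hρ (by omega) 0]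
      exact ((differentiable_const _).inner ℝ
        ((hX j (by omega)).comp (differentiable_id.const_sub _))).const_mul _
  · simp only [two_mul, iteratedDeriv_add_eq_inner_iteratedDeriv_comp_sub hX hρ le_rfl t, sub_zero]
    rw [real_inner_self_eq_norm_sq, ← mul_assoc, ← pow_add, Even.neg_one_pow ⟨n, rfl⟩, one_mul]

/-- Stationary covariance and derivatives in mean square: if `X : ℝ → H` is `n`-times
differentiable into a real Hilbert space and `⟨X(s), X(t)⟩ = ρ(t-s)`, then `ρ` is
`2n`-times differentiable and `‖X⁽ⁿ⁾(t)‖² = (-1)ⁿ ρ⁽²ⁿ⁾(0)` for every `t`. -/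
theorem stationary_covariance_iterated_deriv
    {H : Type*} [NormedAddCommGroup H] [InnerProductSpace ℝ H]
    (n : ℕ) (hn : 1 ≤ n)
    (X : ℝ → H) (hX : ∀ k < n, Differentiable ℝ (iteratedDeriv k X))
    (ρ : ℝ → ℝ) (hρ : ∀ s t : ℝ, inner ℝ (X s) (X t) = ρ (t - s)) :
    (∀ k < 2 * n, Differentiable ℝ (iteratedDeriv k ρ))
    ∧ ∀ t : ℝ, ‖iteratedDeriv n X t‖ ^ 2 = (-1 : ℝ) ^ n * iteratedDeriv (2 * n) ρ 0 :=
  stationary_covariance_iterated_deriv_general n X hX ρ hρ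
end

section
/- Flux identity over a graph domain (divergence theorem used in the wall-law remainder estimate): let ω : ℝ → ℝ be C¹, let a > 0 and h ∈ ℝ with ω(t) < h for all t ∈ [0,a], and let v = (v₁,v₂) : ℝ² → ℝ² be C¹ on a neighborhood of the closed region D = {(t,y) : 0 ≤ t ≤ a, ω(t) ≤ y ≤ h}, with div v = ∂₁v₁ + ∂₂v₂ = 0 on D and v(t, ω(t)) = 0 for all t ∈ [0,a]. Then ∫₀ᵃ v₂(t, h) dt = ∫_{ω(0)}^{h} v₁(0, y) dy − ∫_{ω(a)}^{h} v₁(a, y) dy. -/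
open Set MeasureTheory Filter Topology Metric Asymptotics
open scoped Interval

lemma eventually_forall_uIcc_apply_mem {S : Set (ℝ × ℝ)} {φ : ℝ → ℝ} {t₀ : ℝ}
    (hS : S ∈ 𝓝 (t₀, φ t₀)) (hφ : ContinuousAt φ t₀) :
    ∀ᶠ t in 𝓝 t₀, ∀ y ∈ uIcc (φ t₀) (φ t), (t, y) ∈ S := by
  obtain ⟨u, hu, w, hw, huw⟩ := mem_nhds_prod_iff.1 hS
  obtain ⟨r, hr, hrw⟩ := Metric.mem_nhds_iff.1 hw
  filter_upwards [hu, hφ (ball_mem_nhds _ hr)] with t ht hφt y hy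
  have hball : (ball (φ t₀) r).OrdConnected := by rw [Real.ball_eq_Ioo]; exact ordConnected_Ioo
  exact huw ⟨ht, hrw (hball.uIcc_subset (mem_ball_self hr) hφt hy)⟩

theorem hasDerivAt_integral_from_base_of_eq_zero {E : Type*} [NormedAddCommGroup E]
    [NormedSpace ℝ E] {g : ℝ → ℝ → E} {φ : ℝ → ℝ} {t₀ : ℝ}
    (hg : ContinuousAt (fun p : ℝ × ℝ => g p.1 p.2) (t₀, φ t₀))
    (hg₀ : g t₀ (φ t₀) = 0) (hφ : DifferentiableAt ℝ φ t₀) :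
    HasDerivAt (fun t => ∫ y in φ t₀..φ t, g t y) 0 t₀ := by
  rw [hasDerivAt_iff_isLittleO]
  simp only [intervalIntegral.integral_same, sub_zero, smul_zero]
  refine IsLittleO.trans_isBigO ?_ hφ.hasDerivAt.isBigO_sub
  refine isLittleO_iff.2 fun ε hε => ?_
  have hsmall : ∀ᶠ p : ℝ × ℝ in 𝓝 (t₀, φ t₀), ‖g p.1 p.2‖ ≤ ε := by
    simpa [hg₀] using hg.eventually (closedBall_mem_nhds _ hε)
  -- the integrand is at most `ε` on an interval of length `|φ t - φ t₀| = O(t - t₀)`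
  filter_upwards [eventually_forall_uIcc_apply_mem hsmall hφ.continuousAt] with t ht
  simpa [Real.norm_eq_abs] using
    intervalIntegral.norm_integral_le_of_norm_le_const fun y hy => ht y (uIoc_subset_uIcc hy)

section PartialDerivatives

variable {f : ℝ → ℝ → ℝ} {V : Set (ℝ × ℝ)}

lemma ContinuousOn.intervalIntegrable_of_mem (hf : ContinuousOn (fun p : ℝ × ℝ => f p.1 p.2) V)
    {t c d : ℝ} (h : ∀ y ∈ uIcc c d, (t, y) ∈ V) : IntervalIntegrable (f t) volume c d :=
  (hf.comp (Continuous.continuousOn (by fun_prop)) h).intervalIntegrable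

lemma IsOpen.eventually_forall_uIcc_mem (hV : IsOpen V) {t₀ c d : ℝ}
    (h : ∀ y ∈ uIcc c d, (t₀, y) ∈ V) : ∀ᶠ t in 𝓝 t₀, ∀ y ∈ uIcc c d, (t, y) ∈ V :=
  isCompact_uIcc.eventually_forall_of_forall_eventually fun y hy => hV.mem_nhds (h y hy)

variable (hV : IsOpen V) (hf : ContDiffOn ℝ 1 (fun p : ℝ × ℝ => f p.1 p.2) V)
include hV hf

lemma hasDerivAt_fderiv_apply_fst {t y : ℝ} (hty : (t, y) ∈ V) :
    HasDerivAt (fun s => f s y) (fderiv ℝ (fun p : ℝ × ℝ => f p.1 p.2) (t, y) (1, 0)) t := by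
  have hdiff := (hf.differentiableOn one_ne_zero).differentiableAt (hV.mem_nhds hty)
  exact hdiff.hasFDerivAt.comp_hasDerivAt t ((hasDerivAt_id t).prodMk (hasDerivAt_const t y))

lemma pd1_eq_fderiv {t y : ℝ} (hty : (t, y) ∈ V) :
    pd1 f t y = fderiv ℝ (fun p : ℝ × ℝ => f p.1 p.2) (t, y) (1, 0) :=
  (hasDerivAt_fderiv_apply_fst hV hf hty).deriv

lemma hasDerivAt_pd1 {t y : ℝ} (hty : (t, y) ∈ V) :
    HasDerivAt (fun s => f s y) (pd1 f t y) t :=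
  pd1_eq_fderiv hV hf hty ▸ hasDerivAt_fderiv_apply_fst hV hf hty

lemma continuousOn_pd1 : ContinuousOn (fun p : ℝ × ℝ => pd1 f p.1 p.2) V :=
  ((hf.continuousOn_fderiv_of_isOpen hV le_rfl).clm_apply continuousOn_const).congr
    fun _ hp => pd1_eq_fderiv hV hf hp

lemma integral_pd1_eq_sub {a b y : ℝ} (h : ∀ s ∈ uIcc a b, (s, y) ∈ V) :
    ∫ s in a..b, pd1 f s y = f b y - f a y :=
  intervalIntegral.integral_eq_sub_of_hasDerivAt (fun s hs => hasDerivAt_pd1 hV hf (h s hs))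
    ((continuousOn_pd1 hV hf).comp (Continuous.continuousOn (by fun_prop)) h).intervalIntegrable

lemma integral_pd2_eq_sub {t c d : ℝ} (h : ∀ y ∈ uIcc c d, (t, y) ∈ V) :
    ∫ y in c..d, pd2 f t y = f t d - f t c :=
  integral_pd1_eq_sub (f := flip f) (hV.preimage continuous_swap)
    (hf.comp (contDiff_snd.prodMk contDiff_fst).contDiffOn fun _ hp => hp) h

theorem hasDerivAt_integral_pd1 {t₀ c d : ℝ} (h : ∀ y ∈ uIcc c d, (t₀, y) ∈ V) :
    HasDerivAt (fun t => ∫ y in c..d, f t y) (∫ y in c..d, pd1 f t₀ y) t₀ := by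
  have hnear := hV.eventually_forall_uIcc_mem h
  obtain ⟨ε, hε, hball⟩ := nhds_basis_closedBall.eventually_iff.1 hnear
  have hbox : closedBall t₀ ε ×ˢ uIcc c d ⊆ V := fun p hp => hball hp.1 p.2 hp.2
  obtain ⟨M, hM⟩ := ((isCompact_closedBall t₀ ε).prod isCompact_uIcc)
    |>.exists_bound_of_continuousOn ((continuousOn_pd1 hV hf).mono hbox)
  have hbox' {t y : ℝ} (ht : t ∈ ball t₀ ε) (hy : y ∈ Ι c d) :
      (t, y) ∈ closedBall t₀ ε ×ˢ uIcc c d :=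
    ⟨ball_subset_closedBall ht, uIoc_subset_uIcc hy⟩
  refine (intervalIntegral.hasDerivAt_integral_of_dominated_loc_of_deriv_le (F := f)
    (bound := fun _ => M) (ball_mem_nhds t₀ hε) ?_ (hf.continuousOn.intervalIntegrable_of_mem h)
    ?_ ?_ intervalIntegrable_const ?_).2
  · filter_upwards [hnear] with t ht
    exact (hf.continuousOn.intervalIntegrable_of_mem ht).def'.aestronglyMeasurable
  · exact ((continuousOn_pd1 hV hf).intervalIntegrable_of_mem h).def'.aestronglyMeasurable
  · exact ae_of_all _ fun y hy t ht => hM (t, y) (hbox' ht hy)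
  · exact ae_of_all _ fun y hy t ht => hasDerivAt_pd1 hV hf (hbox (hbox' ht hy))

theorem hasDerivAt_integral_from_graph {φ : ℝ → ℝ} {t₀ d : ℝ}
    (hφ : DifferentiableAt ℝ φ t₀) (hf₀ : f t₀ (φ t₀) = 0)
    (h : ∀ y ∈ uIcc (φ t₀) d, (t₀, y) ∈ V) :
    HasDerivAt (fun t => ∫ y in φ t..d, f t y) (∫ y in φ t₀..d, pd1 f t₀ y) t₀ := by
  have hmem : (t₀, φ t₀) ∈ V := h _ left_mem_uIcc
  have hsplit : (fun t => ∫ y in φ t..d, f t y) =ᶠ[𝓝 t₀]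
      fun t => (∫ y in φ t₀..d, f t y) - ∫ y in φ t₀..φ t, f t y := by
    filter_upwards [hV.eventually_forall_uIcc_mem h,
      eventually_forall_uIcc_apply_mem (hV.mem_nhds hmem) hφ.continuousAt] with t hd hφt
    exact (intervalIntegral.integral_interval_sub_left
      (hf.continuousOn.intervalIntegrable_of_mem hd)
      (hf.continuousOn.intervalIntegrable_of_mem hφt)).symm
  simpa using ((hasDerivAt_integral_pd1 hV hf h).sub (hasDerivAt_integral_from_base_of_eq_zero
    (hf.continuousOn.continuousAt (hV.mem_nhds hmem)) hf₀ hφ)).congr_of_eventuallyEq hsplit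

end PartialDerivatives

/-- Flux identity over a graph domain: if `v = (v₁,v₂)` is `C¹` on a neighborhood of
the region `D` between the graph of a `C¹` function `ω` and the line `y = h` over
`[0,a]`, divergence free on `D`, and vanishes on the graph of `ω`, then the flux
through the top equals the difference of the fluxes through the lateral sides. -/
theorem flux_identity_graph_domain
    (ω : ℝ → ℝ) (hω : ContDiff ℝ 1 ω)
    (a h : ℝ) (ha : 0 < a) (hh : ∀ t ∈ Set.Icc (0 : ℝ) a, ω t < h)
    (v1 v2 : ℝ → ℝ → ℝ)
    (D : Set (ℝ × ℝ))
    (hD : D = {p : ℝ × ℝ | p.1 ∈ Set.Icc (0 : ℝ) a ∧ p.2 ∈ Set.Icc (ω p.1) h})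
    (U : Set (ℝ × ℝ)) (hU : IsOpen U) (hDU : D ⊆ U)
    (hv1 : ContDiffOn ℝ 1 (fun p : ℝ × ℝ => v1 p.1 p.2) U)
    (hv2 : ContDiffOn ℝ 1 (fun p : ℝ × ℝ => v2 p.1 p.2) U)
    (hdiv : ∀ p ∈ D, pd1 v1 p.1 p.2 + pd2 v2 p.1 p.2 = 0)
    (hbc : ∀ t ∈ Set.Icc (0 : ℝ) a, v1 t (ω t) = 0 ∧ v2 t (ω t) = 0) :
    ∫ t in (0:ℝ)..a, v2 t h
      = (∫ y in (ω 0)..h, v1 0 y) - ∫ y in (ω a)..h, v1 a y := by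
  subst hD
  have hderiv : ∀ t ∈ uIcc 0 a,
      HasDerivAt (fun t => ∫ y in ω t..h, v1 t y) (-v2 t h) t := by
    intro t ht
    rw [uIcc_of_le ha.le] at ht
    have hseg : ∀ y ∈ uIcc (ω t) h, (t, y) ∈ U := by
      rw [uIcc_of_le (hh t ht).le]
      exact fun y hy => hDU ⟨ht, hy⟩
    convert hasDerivAt_integral_from_graph hU hv1 (hω.differentiable one_ne_zero t)
      (hbc t ht).1 hseg using 1
    calc -v2 t h = -(v2 t h - v2 t (ω t)) := by rw [(hbc t ht).2, sub_zero]
      _ = -∫ y in ω t..h, pd2 v2 t y := by rw [integral_pd2_eq_sub hU hv2 hseg]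
      _ = ∫ y in ω t..h, pd1 v1 t y := by
        rw [← intervalIntegral.integral_neg]
        refine intervalIntegral.integral_congr fun y hy => ?_
        rw [uIcc_of_le (hh t ht).le] at hy
        linarith [hdiv (t, y) ⟨ht, hy⟩]
  have hint : IntervalIntegrable (fun t => -v2 t h) volume 0 a := by
    refine (ContinuousOn.neg ?_).intervalIntegrable
    refine hv2.continuousOn.comp (continuous_id.prodMk continuous_const).continuousOn
      fun t ht => hDU ?_
    rw [uIcc_of_le ha.le] at ht
    exact ⟨ht, (hh t ht).le, le_rfl⟩
  have hftc := intervalIntegral.integral_eq_sub_of_hasDerivAt hderiv hint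
  rw [intervalIntegral.integral_neg] at hftc
  linarith
end
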